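/- arXiv:1603.08539 — 2 statements merged into one kernel-verified Lean document; each statement's English description precedes it below -/
import Mathlib

section
/- For 0 < q < p ≤ 1, natural number n, and x ∈ [0,1), the (p,q)-Meyer-König and Zeller operator applied to the constant function 1 equals 1: p^{-n(n+1)/2} Σ_{k=0}^{∞} [n+k choose k]_{p,q} x^k p^{-kn} ∏_{s=0}^{n}(p^s - q^s x) = 1. -/
open Filter Topology

noncomputable def pqInt (p q : ℝ) (n : ℕ) : ℝ := (p ^ n - q ^ n) / (p - q)

noncomputable def pqFact (p q : ℝ) (n : ℕ) : ℝ :=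
  ∏ j ∈ Finset.range n, pqInt p q (j + 1)

noncomputable def pqBinom (p q : ℝ) (n k : ℕ) : ℝ :=
  pqFact p q n / (pqFact p q k * pqFact p q (n - k))

noncomputable def mkz (p q : ℝ) (n : ℕ) (f : ℝ → ℝ) (x : ℝ) : ℝ :=
  if x = 1 then f 1 else
    (p ^ (n * (n + 1) / 2))⁻¹ *
      ∑' k : ℕ, pqBinom p q (n + k) k * x ^ k * (p ^ (k * n))⁻¹ *
        (∏ s ∈ Finset.range (n + 1), (p ^ s - q ^ s * x)) *
        f (p ^ n * pqInt p q k / pqInt p q (n + k))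

noncomputable def supNorm (g : ℝ → ℝ) : ℝ :=
  sSup ((fun x => |g x|) '' Set.Icc (0 : ℝ) 1)

noncomputable def modCont (f : ℝ → ℝ) (δ : ℝ) : ℝ :=
  sSup ((fun p : ℝ × ℝ => |f p.1 - f p.2|) ''
    {p : ℝ × ℝ | p.1 ∈ Set.Icc (0 : ℝ) 1 ∧ p.2 ∈ Set.Icc (0 : ℝ) 1 ∧ |p.1 - p.2| ≤ δ})

def StatLim (x : ℕ → ℝ) (L : ℝ) : Prop :=
  ∀ ε > 0, Filter.Tendsto
    (fun n => (((Finset.range (n + 1)).filter (fun k => ε ≤ |x k - L|)).card : ℝ) / (n : ℝ))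
    Filter.atTop (nhds 0)

/-!
Put t = q/p. Every (p,q)-integer, factorial and binomial coefficient is a power of p times the
corresponding t-quantity, and in the series the powers of p cancel against p^(-kn) and
p^(-n(n+1)/2). What remains is the q-binomial series identity
∏_{s ≤ n} (1 - t^s x) · ∑_k [n+k choose k]_t x^k = 1 for 0 ≤ t < 1 and |x| < 1,
proved by induction on n: the q-Pascal rule gives
(1 - x) ∑_k [n+1+k choose k]_t x^k = ∑_k [n+k choose k]_t (t x)^k.
The series converge because [m]_t ≤ 1/(1 - t), which bounds [n+k choose k]_t uniformly in k.
-/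

section Binomial

variable {p q : ℝ}

lemma pqFact_zero : pqFact p q 0 = 1 := Finset.prod_range_zero _

lemma pqFact_succ (m : ℕ) : pqFact p q (m + 1) = pqFact p q m * pqInt p q (m + 1) :=
  Finset.prod_range_succ _ _

lemma pqFact_add (k n : ℕ) :
    pqFact p q (k + n) = pqFact p q k * ∏ i ∈ Finset.range n, pqInt p q (k + i + 1) :=
  Finset.prod_range_add _ _ _

lemma pqBinom_add_left (n k : ℕ) :
    pqBinom p q (n + k) k = pqFact p q (n + k) / (pqFact p q k * pqFact p q n) := by
  rw [pqBinom, Nat.add_sub_cancel]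

lemma pqBinom_zero_right {m : ℕ} (h : pqFact p q m ≠ 0) : pqBinom p q m 0 = 1 := by
  rw [pqBinom, pqFact_zero, Nat.sub_zero, one_mul, div_self h]

lemma pqBinom_self {m : ℕ} (h : pqFact p q m ≠ 0) : pqBinom p q m m = 1 := by
  rw [pqBinom, Nat.sub_self, pqFact_zero, mul_one, div_self h]

end Binomial

section QAnalogue

variable {t : ℝ}

lemma pqInt_one_add (ht : t ≠ 1) (a b : ℕ) :
    pqInt 1 t (a + b) = pqInt 1 t a + t ^ a * pqInt 1 t b := by
  have : 1 - t ≠ 0 := sub_ne_zero.2 ht.symm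
  simp only [pqInt, one_pow]
  field_simp
  ring

lemma pqInt_one_nonneg (ht₀ : 0 ≤ t) (ht₁ : t < 1) (m : ℕ) : 0 ≤ pqInt 1 t m := by
  rw [pqInt, one_pow]
  exact div_nonneg (sub_nonneg.2 (pow_le_one₀ ht₀ ht₁.le)) (sub_nonneg.2 ht₁.le)

lemma pqInt_one_succ_pos (ht₀ : 0 ≤ t) (ht₁ : t < 1) (m : ℕ) : 0 < pqInt 1 t (m + 1) := by
  rw [pqInt, one_pow]
  exact div_pos (sub_pos.2 (pow_lt_one₀ ht₀ ht₁ m.succ_ne_zero)) (sub_pos.2 ht₁)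

lemma pqInt_one_le (ht₀ : 0 ≤ t) (ht₁ : t < 1) (m : ℕ) : pqInt 1 t m ≤ (1 - t)⁻¹ := by
  rw [pqInt, one_pow, inv_eq_one_div]
  exact div_le_div_of_nonneg_right (by linarith [pow_nonneg ht₀ m]) (sub_nonneg.2 ht₁.le)

lemma pqFact_one_pos (ht₀ : 0 ≤ t) (ht₁ : t < 1) (m : ℕ) : 0 < pqFact 1 t m :=
  Finset.prod_pos fun j _ => pqInt_one_succ_pos ht₀ ht₁ j

lemma pqBinom_one_pascal (ht₀ : 0 ≤ t) (ht₁ : t < 1) (n k : ℕ) :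
    pqBinom 1 t (n + 1 + (k + 1)) (k + 1) =
      pqBinom 1 t (n + 1 + k) k + t ^ (k + 1) * pqBinom 1 t (n + (k + 1)) (k + 1) := by
  have hsplit :
      pqInt 1 t (n + (k + 1) + 1) = pqInt 1 t (k + 1) + t ^ (k + 1) * pqInt 1 t (n + 1) := by
    rw [← pqInt_one_add ht₁.ne]
    ring_nf
  simp only [pqBinom_add_left]
  rw [show n + 1 + (k + 1) = n + (k + 1) + 1 by ring, show n + 1 + k = n + (k + 1) by ring,
    pqFact_succ (n + (k + 1)), pqFact_succ k, pqFact_succ n, hsplit]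
  have := (pqFact_one_pos ht₀ ht₁ k).ne'
  have := (pqFact_one_pos ht₀ ht₁ n).ne'
  have := (pqInt_one_succ_pos ht₀ ht₁ k).ne'
  have := (pqInt_one_succ_pos ht₀ ht₁ n).ne'
  field_simp

lemma pqBinom_one_add_left_nonneg (ht₀ : 0 ≤ t) (ht₁ : t < 1) (n k : ℕ) :
    0 ≤ pqBinom 1 t (n + k) k := by
  rw [pqBinom_add_left]
  exact div_nonneg (pqFact_one_pos ht₀ ht₁ _).le
    (mul_pos (pqFact_one_pos ht₀ ht₁ _) (pqFact_one_pos ht₀ ht₁ _)).le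

lemma pqBinom_one_add_left_le (ht₀ : 0 ≤ t) (ht₁ : t < 1) (n k : ℕ) :
    pqBinom 1 t (n + k) k ≤ ((1 - t) ^ n * pqFact 1 t n)⁻¹ := by
  have hk := pqFact_one_pos ht₀ ht₁ k
  have hn := pqFact_one_pos ht₀ ht₁ n
  have hprod : ∏ i ∈ Finset.range n, pqInt 1 t (k + i + 1) ≤ (1 - t)⁻¹ ^ n := by
    simpa using Finset.prod_le_prod (fun i _ => pqInt_one_nonneg ht₀ ht₁ _)
      (fun i _ => pqInt_one_le ht₀ ht₁ (k + i + 1)) (s := Finset.range n) (g := fun _ => (1 - t)⁻¹)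
  rw [pqBinom_add_left, add_comm n k, pqFact_add, mul_div_mul_left _ _ hk.ne', mul_inv, ← inv_pow,
    ← div_eq_mul_inv]
  exact div_le_div_of_nonneg_right hprod hn.le

lemma summable_pqBinom_one_mul_pow (ht₀ : 0 ≤ t) (ht₁ : t < 1) (n : ℕ) {x : ℝ} (hx : |x| < 1) :
    Summable fun k => pqBinom 1 t (n + k) k * x ^ k := by
  refine ((summable_geometric_of_lt_one (abs_nonneg x) hx).mul_left
    ((1 - t) ^ n * pqFact 1 t n)⁻¹).of_norm_bounded fun k => ?_
  rw [norm_mul, norm_pow, Real.norm_eq_abs, Real.norm_eq_abs,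
    abs_of_nonneg (pqBinom_one_add_left_nonneg ht₀ ht₁ n k)]
  exact mul_le_mul_of_nonneg_right (pqBinom_one_add_left_le ht₀ ht₁ n k) (by positivity)

lemma abs_mul_lt_one (ht₀ : 0 ≤ t) (ht₁ : t < 1) {x : ℝ} (hx : |x| < 1) : |t * x| < 1 := by
  rw [abs_mul, abs_of_nonneg ht₀]
  exact mul_lt_one_of_nonneg_of_lt_one_left ht₀ ht₁ hx.le

lemma one_sub_mul_tsum_pqBinom_one_succ (ht₀ : 0 ≤ t) (ht₁ : t < 1) (n : ℕ) {x : ℝ}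
    (hx : |x| < 1) :
    (1 - x) * ∑' k, pqBinom 1 t (n + 1 + k) k * x ^ k =
      ∑' k, pqBinom 1 t (n + k) k * (t * x) ^ k := by
  set a : ℕ → ℝ := fun k => pqBinom 1 t (n + 1 + k) k * x ^ k
  have ha := summable_pqBinom_one_mul_pow ht₀ ht₁ (n + 1) hx
  have hb := summable_pqBinom_one_mul_pow ht₀ ht₁ n (abs_mul_lt_one ht₀ ht₁ hx)
  have hstep (k : ℕ) :
      pqBinom 1 t (n + (k + 1)) (k + 1) * (t * x) ^ (k + 1) = a (k + 1) - x * a k := by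
    simp only [a, pqBinom_one_pascal ht₀ ht₁]
    ring
  rw [hb.tsum_eq_zero_add, tsum_congr hstep,
    ((summable_nat_add_iff 1).2 ha).tsum_sub (ha.mul_left x), tsum_mul_left, ha.tsum_eq_zero_add]
  simp only [pqBinom_zero_right (pqFact_one_pos ht₀ ht₁ _).ne', pow_zero, mul_one]
  ring

lemma prod_one_sub_mul_tsum_pqBinom_one (ht₀ : 0 ≤ t) (ht₁ : t < 1) (n : ℕ) {x : ℝ}
    (hx : |x| < 1) :
    (∏ s ∈ Finset.range (n + 1), (1 - t ^ s * x)) * ∑' k, pqBinom 1 t (n + k) k * x ^ k = 1 := by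
  induction n generalizing x with
  | zero =>
    simp only [zero_add, pqBinom_self (pqFact_one_pos ht₀ ht₁ _).ne', one_mul,
      Finset.prod_range_one, pow_zero, tsum_geometric_of_abs_lt_one hx]
    exact mul_inv_cancel₀ (sub_ne_zero.2 (abs_lt.1 hx).2.ne')
  | succ n ih =>
    rw [Finset.prod_range_succ', pow_zero, one_mul, mul_assoc,
      one_sub_mul_tsum_pqBinom_one_succ ht₀ ht₁ n hx]
    convert ih (abs_mul_lt_one ht₀ ht₁ hx) using 3 with s
    ring

end QAnalogue

section Rescaling

variable {p q : ℝ}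

lemma pqInt_succ_eq_pow_mul (hp : p ≠ 0) (m : ℕ) :
    pqInt p q (m + 1) = p ^ m * pqInt 1 (q / p) (m + 1) := by
  rcases eq_or_ne p q with rfl | hpq
  · simp [pqInt, div_self hp]
  simp only [pqInt, one_pow, div_pow]
  field_simp [sub_ne_zero.2 hpq]
  ring

lemma pqFact_eq_pow_mul (hp : p ≠ 0) (m : ℕ) :
    pqFact p q m = p ^ (∑ j ∈ Finset.range m, j) * pqFact 1 (q / p) m := by
  simp only [pqFact, pqInt_succ_eq_pow_mul hp, Finset.prod_mul_distrib]
  rw [Finset.prod_pow_eq_pow_sum]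

lemma pqBinom_add_left_eq_pow_mul (hp : p ≠ 0) (n k : ℕ) :
    pqBinom p q (n + k) k = p ^ (k * n) * pqBinom 1 (q / p) (n + k) k := by
  have hsum : ∑ j ∈ Finset.range (k + n), j =
      (∑ j ∈ Finset.range k, j) + (∑ j ∈ Finset.range n, j) + k * n := by
    rw [Finset.sum_range_add, Finset.sum_add_distrib, Finset.sum_const, Finset.card_range,
      smul_eq_mul]
    ring
  rw [pqBinom_add_left, pqBinom_add_left, pqFact_eq_pow_mul hp (n + k), pqFact_eq_pow_mul hp k,
    pqFact_eq_pow_mul hp n, add_comm n k, hsum, pow_add, pow_add]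
  field_simp

lemma prod_pow_sub_pow_mul (hp : p ≠ 0) (n : ℕ) (x : ℝ) :
    ∏ s ∈ Finset.range n, (p ^ s - q ^ s * x) =
      p ^ (∑ s ∈ Finset.range n, s) * ∏ s ∈ Finset.range n, (1 - (q / p) ^ s * x) := by
  rw [← Finset.prod_pow_eq_pow_sum, ← Finset.prod_mul_distrib]
  refine Finset.prod_congr rfl fun s _ => ?_
  rw [div_pow]
  field_simp

end Rescaling

theorem mkz_one_general (p q : ℝ) (hq : 0 < q) (hqp : q < p)
    (n : ℕ) (x : ℝ) (hx : x ∈ Set.Ico (0 : ℝ) 1) :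
    mkz p q n (fun _ => 1) x = 1 := by
  have hp : p ≠ 0 := (hq.trans hqp).ne'
  have ht₀ : 0 ≤ q / p := div_nonneg hq.le (hq.trans hqp).le
  have ht₁ : q / p < 1 := (div_lt_one (hq.trans hqp)).2 hqp
  have hxabs : |x| < 1 := abs_lt.2 ⟨by linarith [hx.1], hx.2⟩
  have hdeg : n * (n + 1) / 2 = ∑ s ∈ Finset.range (n + 1), s := by
    rw [Finset.sum_range_id, Nat.add_sub_cancel, mul_comm]
  have hterm (k : ℕ) (P : ℝ) :
      pqBinom p q (n + k) k * x ^ k * (p ^ (k * n))⁻¹ * P * 1 =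
        pqBinom 1 (q / p) (n + k) k * x ^ k * P := by
    rw [pqBinom_add_left_eq_pow_mul hp]
    field_simp
  have key := prod_one_sub_mul_tsum_pqBinom_one ht₀ ht₁ n hxabs
  rw [mkz, if_neg hx.2.ne, tsum_congr fun k => hterm k _, tsum_mul_right, prod_pow_sub_pow_mul hp,
    hdeg]
  field_simp
  linear_combination key

theorem mkz_one (p q : ℝ) (hq : 0 < q) (hqp : q < p) (hp : p ≤ 1)
    (n : ℕ) (x : ℝ) (hx : x ∈ Set.Ico (0 : ℝ) 1) :
    mkz p q n (fun _ => 1) x = 1 :=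
  mkz_one_general p q hq hqp n x hx
end

section
/- Let 0 < q_n < p_n ≤ 1 be sequences such that p_n → 1 and q_n → 1 (so that p_n^n/[n+1]_{p_n,q_n} + (p_n − 1) → 0 in the statistical sense). If st-lim_n ‖M_{n,p_n,q_n}(f_i; ·) − f_i‖_{C[0,1]} = 0 for the test functions f_i(x) = x^i, i = 0, 1, 2, then st-lim_n ‖M_{n,p_n,q_n}(f; ·) − f‖_{C[0,1]} = 0 for every f ∈ C[0,1]. -/
open Filter Topology

/-!
For fixed `n` and `x < 1`, `g ↦ M_{n,p,q}(g; x)` is a series `∑ w_k g(t_k)` with nonnegative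
weights and nodes `t_k ∈ [0, 1]`. The factor `1 - x` of the product `∏ (p^s - q^s x)` bounds the
weights by a multiple of `(1 - x) x^k`, so their total mass is bounded independently of `x`.
Uniform continuity gives `|f s - f x| ≤ ε + B (s - x)²`, and applying the positive functional to it
yields Korovkin's estimate `‖M f - f‖ ≤ ε + C ∑_{i ≤ 2} ‖M e_i - e_i‖`. Hence the indices where the
left side is large lie in the union of the indices where one of the three test errors is large, and
the densities of these finitely many sets tend to `0`.
-/

section WeightedSum

variable {w : ℕ → ℝ}

lemma summable_mul_of_abs_le (hw0 : ∀ k, 0 ≤ w k) (hw : Summable w) {g : ℕ → ℝ} {M : ℝ}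
    (hg : ∀ k, |g k| ≤ M) : Summable fun k => w k * g k :=
  hw.mul_right M |>.of_norm_bounded fun k => by
    rw [Real.norm_eq_abs, abs_mul, abs_of_nonneg (hw0 k)]
    exact mul_le_mul_of_nonneg_left (hg k) (hw0 k)

lemma abs_tsum_mul_le (hw0 : ∀ k, 0 ≤ w k) (hw : Summable w) {g : ℕ → ℝ} {M : ℝ}
    (hg : ∀ k, |g k| ≤ M) : |∑' k, w k * g k| ≤ (∑' k, w k) * M := by
  rw [← Real.norm_eq_abs]
  refine tsum_of_norm_bounded (hw.hasSum.mul_right M) fun k => ?_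
  rw [Real.norm_eq_abs, abs_mul, abs_of_nonneg (hw0 k)]
  exact mul_le_mul_of_nonneg_left (hg k) (hw0 k)

variable {t : ℕ → ℝ} {f : ℝ → ℝ} {M ε B x : ℝ}

lemma abs_tsum_mul_sub_le_moments (hw0 : ∀ k, 0 ≤ w k) (hw : Summable w)
    (ht : ∀ k, t k ∈ Set.Icc (0 : ℝ) 1) (hM : ∀ s ∈ Set.Icc (0 : ℝ) 1, |f s| ≤ M)
    (hfx : ∀ s ∈ Set.Icc (0 : ℝ) 1, |f s - f x| ≤ ε + B * (s - x) ^ 2) :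
    |∑' k, w k * f (t k) - f x * ∑' k, w k|
      ≤ ε * ∑' k, w k + B * (∑' k, w k * t k ^ 2 - 2 * x * ∑' k, w k * t k
        + x ^ 2 * ∑' k, w k) := by
  have ht_abs : ∀ k, |t k| ≤ 1 := fun k => abs_le.mpr ⟨by linarith [(ht k).1], (ht k).2⟩
  have hS0 := hw.hasSum
  have hS1 := (summable_mul_of_abs_le hw0 hw ht_abs).hasSum
  have hS2 := (summable_mul_of_abs_le hw0 hw (g := fun k => t k ^ 2) fun k => by
    rw [abs_pow]; exact pow_le_one₀ (abs_nonneg _) (ht_abs k)).hasSum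
  have hSf := (summable_mul_of_abs_le hw0 hw fun k => hM _ (ht k)).hasSum
  have hdiff := hSf.sub (hS0.mul_left (f x))
  have hmajorant := (hS0.mul_left ε).add
    (((hS2.sub (hS1.mul_left (2 * x))).add (hS0.mul_left (x ^ 2))).mul_left B)
  rw [← hdiff.tsum_eq, ← Real.norm_eq_abs]
  refine tsum_of_norm_bounded hmajorant fun k => ?_
  calc ‖w k * f (t k) - f x * w k‖ = w k * |f (t k) - f x| := by
        rw [Real.norm_eq_abs, mul_comm (f x), ← mul_sub, abs_mul, abs_of_nonneg (hw0 k)]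
    _ ≤ w k * (ε + B * (t k - x) ^ 2) := mul_le_mul_of_nonneg_left (hfx _ (ht k)) (hw0 k)
    _ = _ := by ring

-- Korovkin's estimate for the positive functional `g ↦ ∑' k, w k * g (t k)`.
lemma abs_tsum_mul_sub_le (hw0 : ∀ k, 0 ≤ w k) (hw : Summable w)
    (ht : ∀ k, t k ∈ Set.Icc (0 : ℝ) 1) (hM : ∀ s ∈ Set.Icc (0 : ℝ) 1, |f s| ≤ M)
    (hx : x ∈ Set.Icc (0 : ℝ) 1)
    (hfx : ∀ s ∈ Set.Icc (0 : ℝ) 1, |f s - f x| ≤ ε + B * (s - x) ^ 2)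
    (hε : 0 ≤ ε) (hB : 0 ≤ B) :
    |∑' k, w k * f (t k) - f x|
      ≤ ε + (ε + M + B) * |∑' k, w k - 1| + 2 * B * |∑' k, w k * t k - x|
        + B * |∑' k, w k * t k ^ 2 - x ^ 2| := by
  have hlocal := abs_tsum_mul_sub_le_moments hw0 hw ht hM hfx
  set S0 := ∑' k, w k
  set S1 := ∑' k, w k * t k
  set S2 := ∑' k, w k * t k ^ 2
  set Sf := ∑' k, w k * f (t k)
  have hsplit : |Sf - f x| ≤ |Sf - f x * S0| + M * |S0 - 1| := calc
    |Sf - f x| = |(Sf - f x * S0) + f x * (S0 - 1)| := by congr 1; ring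
    _ ≤ |Sf - f x * S0| + |f x| * |S0 - 1| := by rw [← abs_mul]; exact abs_add_le _ _
    _ ≤ |Sf - f x * S0| + M * |S0 - 1| := by gcongr; exact hM x hx
  have hexpand : ε * S0 + B * (S2 - 2 * x * S1 + x ^ 2 * S0)
      = ε + (ε + B * x ^ 2) * (S0 - 1) + B * (S2 - x ^ 2) - 2 * B * x * (S1 - x) := by ring
  have h0 : (ε + B * x ^ 2) * (S0 - 1) ≤ (ε + B) * |S0 - 1| := calc
    _ ≤ (ε + B * x ^ 2) * |S0 - 1| :=
      mul_le_mul_of_nonneg_left (le_abs_self _) (add_nonneg hε (mul_nonneg hB (sq_nonneg x)))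
    _ ≤ (ε + B) * |S0 - 1| := by gcongr; exact mul_le_of_le_one_right hB (pow_le_one₀ hx.1 hx.2)
  have h1 : -(2 * B * x * (S1 - x)) ≤ 2 * B * |S1 - x| := by
    have := neg_abs_le (S1 - x)
    have := abs_nonneg (S1 - x)
    nlinarith [mul_nonneg hB hx.1, mul_nonneg hB (sub_nonneg.mpr hx.2)]
  have h2 : B * (S2 - x ^ 2) ≤ B * |S2 - x ^ 2| := mul_le_mul_of_nonneg_left (le_abs_self _) hB
  linarith

lemma hasSum_one_sub_mul_geometric {x : ℝ} (hx0 : 0 ≤ x) (hx1 : x < 1) :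
    HasSum (fun k => (1 - x) * x ^ k) 1 := by
  simpa only [mul_inv_cancel₀ (sub_pos.mpr hx1).ne'] using
    (hasSum_geometric_of_lt_one hx0 hx1).mul_left (1 - x)

end WeightedSum

section Statistical

variable {ι : Type*} {s : Finset ι} {u : ℕ → ℝ} {v : ι → ℕ → ℝ}

lemma statLim_zero_of_exists_le (hv : ∀ i ∈ s, StatLim (v i) 0)
    (h : ∀ ε > 0, ∃ δ > 0, ∀ n, ε ≤ |u n| → ∃ i ∈ s, δ ≤ |v i n|) : StatLim u 0 := by
  intro ε hε
  obtain ⟨δ, hδ, hcover⟩ := h ε hε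
  have hsum := tendsto_finsetSum s fun i hi => hv i hi δ hδ
  rw [Finset.sum_const_zero] at hsum
  refine squeeze_zero (fun N => by positivity) (fun N => ?_) hsum
  rw [← Finset.sum_div]
  gcongr
  have hsub : (Finset.range (N + 1)).filter (fun k => ε ≤ |u k - 0|)
      ⊆ s.biUnion fun i => (Finset.range (N + 1)).filter (fun k => δ ≤ |v i k - 0|) := by
    intro k hk
    simp only [Finset.mem_filter, sub_zero, Finset.mem_biUnion] at hk ⊢
    obtain ⟨i, hi, hik⟩ := hcover k hk.2
    exact ⟨i, hi, hk.1, hik⟩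
  exact_mod_cast (Finset.card_le_card hsub).trans Finset.card_biUnion_le

lemma statLim_zero_of_abs_le_add_mul_sum (hv : ∀ i ∈ s, StatLim (v i) 0)
    (hu : ∀ ε > 0, ∃ C, ∀ n, |u n| ≤ ε + C * ∑ i ∈ s, |v i n|) : StatLim u 0 := by
  refine statLim_zero_of_exists_le hv fun ε hε => ?_
  obtain ⟨C, hC⟩ := hu (ε / 2) (half_pos hε)
  set A := max C 0 * s.card
  have hA : 0 ≤ A := by positivity
  refine ⟨ε / (2 * (A + 1)), by positivity, fun n hn => ?_⟩
  by_contra! hsmall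
  have hsum : ∑ i ∈ s, |v i n| ≤ s.card * (ε / (2 * (A + 1))) := by
    simpa using Finset.sum_le_card_nsmul s _ _ fun i hi => (hsmall i hi).le
  have hCsum : C * ∑ i ∈ s, |v i n| ≤ A * (ε / (2 * (A + 1))) := calc
    C * ∑ i ∈ s, |v i n| ≤ max C 0 * ∑ i ∈ s, |v i n| :=
      mul_le_mul_of_nonneg_right (le_max_left _ _) (Finset.sum_nonneg fun _ _ => abs_nonneg _)
    _ ≤ max C 0 * (s.card * (ε / (2 * (A + 1)))) :=
      mul_le_mul_of_nonneg_left hsum (le_max_right _ _)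
    _ = A * (ε / (2 * (A + 1))) := by ring
  have hAε : A * (ε / (2 * (A + 1))) < ε / 2 := by
    rw [mul_div_assoc', div_lt_div_iff₀ (by positivity) two_pos]
    nlinarith
  linarith [hC n]

end Statistical

lemma IsCompact.exists_abs_sub_le_add_mul_sq {K : Set ℝ} (hK : IsCompact K) {f : ℝ → ℝ}
    (hf : ContinuousOn f K) {ε : ℝ} (hε : 0 < ε) :
    ∃ B ≥ 0, ∀ s ∈ K, ∀ t ∈ K, |f s - f t| ≤ ε + B * (s - t) ^ 2 := by
  obtain ⟨M, hM⟩ := hK.exists_bound_of_continuousOn hf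
  obtain ⟨δ, hδ, hfδ⟩ :=
    Metric.uniformContinuousOn_iff.mp (hK.uniformContinuousOn_of_continuous hf) ε hε
  refine ⟨2 * max M 0 / δ ^ 2, by positivity, fun s hs t ht => ?_⟩
  have hB : 0 ≤ 2 * max M 0 / δ ^ 2 * (s - t) ^ 2 := by positivity
  rcases lt_or_ge |s - t| δ with hclose | hfar
  · have := hfδ s hs t ht (by rwa [Real.dist_eq])
    rw [Real.dist_eq] at this
    linarith
  · have hδst : δ ^ 2 ≤ (s - t) ^ 2 := by
      rw [← sq_abs (s - t)]
      exact pow_le_pow_left₀ hδ.le hfar 2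
    calc |f s - f t| ≤ |f s| + |f t| := abs_sub _ _
      _ ≤ 2 * max M 0 := by
          have := hM s hs
          have := hM t ht
          rw [Real.norm_eq_abs] at *
          linarith [le_max_left M 0]
      _ ≤ 2 * max M 0 / δ ^ 2 * (s - t) ^ 2 := by
          rw [div_mul_eq_mul_div, le_div_iff₀ (by positivity)]
          gcongr
      _ ≤ ε + 2 * max M 0 / δ ^ 2 * (s - t) ^ 2 := le_add_of_nonneg_left hε.le

section SupNorm

variable {g : ℝ → ℝ} {C : ℝ}

lemma supNorm_nonneg (g : ℝ → ℝ) : 0 ≤ supNorm g :=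
  Real.sSup_nonneg <| by
    rintro _ ⟨y, -, rfl⟩
    exact abs_nonneg _

lemma abs_le_supNorm (hC : ∀ y ∈ Set.Icc (0 : ℝ) 1, |g y| ≤ C) {x : ℝ}
    (hx : x ∈ Set.Icc (0 : ℝ) 1) : |g x| ≤ supNorm g :=
  le_csSup ⟨C, by rintro _ ⟨y, hy, rfl⟩; exact hC y hy⟩ ⟨x, hx, rfl⟩

lemma supNorm_le (hC : ∀ y ∈ Set.Icc (0 : ℝ) 1, |g y| ≤ C) : supNorm g ≤ C :=
  csSup_le ⟨|g 0|, 0, ⟨le_rfl, zero_le_one⟩, rfl⟩ <| by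
    rintro _ ⟨y, hy, rfl⟩
    exact hC y hy

end SupNorm

section PQ

variable {P Q : ℝ}

lemma pqInt_nonneg (hQ : 0 ≤ Q) (hQP : Q < P) (m : ℕ) : 0 ≤ pqInt P Q m :=
  div_nonneg (sub_nonneg.mpr (pow_le_pow_left₀ hQ hQP.le m)) (sub_nonneg.mpr hQP.le)

lemma pqInt_pos (hQ : 0 ≤ Q) (hQP : Q < P) {m : ℕ} (hm : m ≠ 0) : 0 < pqInt P Q m :=
  div_pos (sub_pos.mpr (pow_lt_pow_left₀ hQP hQ hm)) (sub_pos.mpr hQP)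

lemma pqInt_le (hQ : 0 ≤ Q) (hQP : Q < P) (m : ℕ) : pqInt P Q m ≤ P ^ m / (P - Q) :=
  div_le_div_of_nonneg_right (sub_le_self _ (pow_nonneg hQ m)) (sub_nonneg.mpr hQP.le)

lemma pqInt_add (hQP : Q ≠ P) (n k : ℕ) :
    pqInt P Q (n + k) = P ^ n * pqInt P Q k + Q ^ k * pqInt P Q n := by
  have : P - Q ≠ 0 := sub_ne_zero.mpr hQP.symm
  unfold pqInt
  field_simp
  ring

lemma pqFact_pos (hQ : 0 ≤ Q) (hQP : Q < P) (n : ℕ) : 0 < pqFact P Q n :=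
  Finset.prod_pos fun j _ => pqInt_pos hQ hQP j.succ_ne_zero

lemma pqBinom_nonneg (hQ : 0 ≤ Q) (hQP : Q < P) (n k : ℕ) : 0 ≤ pqBinom P Q n k :=
  div_nonneg (pqFact_pos hQ hQP _).le
    (mul_nonneg (pqFact_pos hQ hQP _).le (pqFact_pos hQ hQP _).le)

lemma pqBinom_add_left_eq (hQ : 0 ≤ Q) (hQP : Q < P) (n k : ℕ) :
    pqBinom P Q (n + k) k = (∏ j ∈ Finset.range n, pqInt P Q (k + j + 1)) / pqFact P Q n := by
  have hsplit : pqFact P Q (n + k)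
      = pqFact P Q k * ∏ j ∈ Finset.range n, pqInt P Q (k + j + 1) := by
    rw [pqFact, add_comm n k, Finset.prod_range_add]
    rfl
  rw [pqBinom, Nat.add_sub_cancel, hsplit]
  exact mul_div_mul_left _ _ (pqFact_pos hQ hQP k).ne'

lemma prod_range_pow_succ (P : ℝ) (n : ℕ) :
    ∏ j ∈ Finset.range n, P ^ (j + 1) = P ^ (n * (n + 1) / 2) := by
  have hgauss : ∑ j ∈ Finset.range n, (j + 1) = ∑ j ∈ Finset.range (n + 1), j := by
    rw [Finset.sum_range_succ', add_zero]
  rw [Finset.prod_pow_eq_pow_sum, hgauss, Finset.sum_range_id, Nat.add_sub_cancel, mul_comm]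

lemma pqBinom_add_left_le (hQ : 0 ≤ Q) (hQP : Q < P) (n k : ℕ) :
    pqBinom P Q (n + k) k
      ≤ P ^ (k * n) * P ^ (n * (n + 1) / 2) / ((P - Q) ^ n * pqFact P Q n) := by
  have hprod : ∏ j ∈ Finset.range n, pqInt P Q (k + j + 1)
      ≤ P ^ (k * n) * P ^ (n * (n + 1) / 2) / (P - Q) ^ n := calc
    _ ≤ ∏ j ∈ Finset.range n, P ^ (k + j + 1) / (P - Q) :=
      Finset.prod_le_prod (fun _ _ => pqInt_nonneg hQ hQP _) fun _ _ => pqInt_le hQ hQP _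
    _ = P ^ (k * n) * P ^ (n * (n + 1) / 2) / (P - Q) ^ n := by
      simp_rw [add_assoc, pow_add P k]
      rw [Finset.prod_div_distrib, Finset.prod_mul_distrib, Finset.prod_const, Finset.prod_const,
        Finset.card_range, ← pow_mul, prod_range_pow_succ]
  rw [pqBinom_add_left_eq hQ hQP, ← div_div]
  exact div_le_div_of_nonneg_right hprod (pqFact_pos hQ hQP n).le

end PQ

section MKZ

variable {P Q x : ℝ} {n : ℕ}

noncomputable def mkzWeight (P Q : ℝ) (n : ℕ) (x : ℝ) (k : ℕ) : ℝ :=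
  (P ^ (n * (n + 1) / 2))⁻¹ * (pqBinom P Q (n + k) k * x ^ k * (P ^ (k * n))⁻¹ *
    ∏ s ∈ Finset.range (n + 1), (P ^ s - Q ^ s * x))

noncomputable def mkzNode (P Q : ℝ) (n k : ℕ) : ℝ :=
  P ^ n * pqInt P Q k / pqInt P Q (n + k)

noncomputable def mkzBound (P Q : ℝ) (n : ℕ) : ℝ :=
  P ^ (n * (n + 1) / 2) / ((P - Q) ^ n * pqFact P Q n)

lemma mkz_of_ne_one (hx : x ≠ 1) (g : ℝ → ℝ) :
    mkz P Q n g x = ∑' k, mkzWeight P Q n x k * g (mkzNode P Q n k) := by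
  rw [mkz, if_neg hx, ← tsum_mul_left]
  congr 1 with k
  rw [mkzWeight, mkzNode]
  ring

lemma mkz_one_s12 (g : ℝ → ℝ) : mkz P Q n g 1 = g 1 := if_pos rfl

lemma mkzNode_mem_Icc (hQ : 0 ≤ Q) (hQP : Q < P) (n k : ℕ) :
    mkzNode P Q n k ∈ Set.Icc (0 : ℝ) 1 := by
  have ha : 0 ≤ P ^ n * pqInt P Q k :=
    mul_nonneg (pow_nonneg (hQ.trans hQP.le) n) (pqInt_nonneg hQ hQP k)
  have hb : 0 ≤ Q ^ k * pqInt P Q n := mul_nonneg (pow_nonneg hQ k) (pqInt_nonneg hQ hQP n)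
  rw [mkzNode, pqInt_add hQP.ne]
  exact ⟨div_nonneg ha (add_nonneg ha hb),
    div_le_one_of_le₀ (le_add_of_nonneg_right hb) (add_nonneg ha hb)⟩

lemma sub_pow_mul_nonneg (hQ : 0 ≤ Q) (hQP : Q ≤ P) (hx : x ∈ Set.Icc (0 : ℝ) 1) (s : ℕ) :
    0 ≤ P ^ s - Q ^ s * x :=
  sub_nonneg.mpr ((mul_le_of_le_one_right (pow_nonneg hQ s) hx.2).trans
    (pow_le_pow_left₀ hQ hQP s))

lemma prod_range_sub_pow_mul_le (hQ : 0 ≤ Q) (hQP : Q ≤ P) (hx : x ∈ Set.Icc (0 : ℝ) 1) (n : ℕ) :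
    ∏ s ∈ Finset.range (n + 1), (P ^ s - Q ^ s * x) ≤ (1 - x) * P ^ (n * (n + 1) / 2) := by
  rw [Finset.prod_range_succ', pow_zero, pow_zero, one_mul, mul_comm, ← prod_range_pow_succ]
  gcongr with s
  · exact sub_nonneg.mpr hx.2
  · exact fun s _ => sub_pow_mul_nonneg hQ hQP hx _
  · exact sub_le_self _ (mul_nonneg (pow_nonneg hQ _) hx.1)

lemma mkzWeight_nonneg (hQ : 0 ≤ Q) (hQP : Q < P) (hx : x ∈ Set.Icc (0 : ℝ) 1) (k : ℕ) :
    0 ≤ mkzWeight P Q n x k := by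
  have hP : 0 < P := hQ.trans_lt hQP
  have hprod := Finset.prod_nonneg fun s (_ : s ∈ Finset.range (n + 1)) =>
    sub_pow_mul_nonneg hQ hQP.le hx s
  have := pqBinom_nonneg hQ hQP (n + k) k
  have := hx.1
  unfold mkzWeight
  positivity

lemma mkzWeight_le (hQ : 0 ≤ Q) (hQP : Q < P) (hx : x ∈ Set.Icc (0 : ℝ) 1) (k : ℕ) :
    mkzWeight P Q n x k ≤ mkzBound P Q n * ((1 - x) * x ^ k) := by
  have hP : 0 < P := hQ.trans_lt hQP
  have hPQ : 0 < P - Q := sub_pos.mpr hQP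
  have := pqFact_pos hQ hQP n
  have := hx.1
  calc mkzWeight P Q n x k
      ≤ (P ^ (n * (n + 1) / 2))⁻¹ *
        (P ^ (k * n) * P ^ (n * (n + 1) / 2) / ((P - Q) ^ n * pqFact P Q n) * x ^ k *
          (P ^ (k * n))⁻¹ * ((1 - x) * P ^ (n * (n + 1) / 2))) := by
        unfold mkzWeight
        gcongr
        · exact Finset.prod_nonneg fun s _ => sub_pow_mul_nonneg hQ hQP.le hx s
        · exact pqBinom_add_left_le hQ hQP n k
        · exact prod_range_sub_pow_mul_le hQ hQP.le hx n
    _ = mkzBound P Q n * ((1 - x) * x ^ k) := by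
        unfold mkzBound
        field_simp

lemma summable_mkzWeight (hQ : 0 ≤ Q) (hQP : Q < P) (hx0 : 0 ≤ x) (hx1 : x < 1) :
    Summable (mkzWeight P Q n x) :=
  .of_nonneg_of_le (mkzWeight_nonneg hQ hQP ⟨hx0, hx1.le⟩) (mkzWeight_le hQ hQP ⟨hx0, hx1.le⟩)
    ((hasSum_one_sub_mul_geometric hx0 hx1).mul_left _).summable

lemma tsum_mkzWeight_le (hQ : 0 ≤ Q) (hQP : Q < P) (hx0 : 0 ≤ x) (hx1 : x < 1) :
    ∑' k, mkzWeight P Q n x k ≤ mkzBound P Q n := by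
  simpa only [mul_one] using hasSum_le (mkzWeight_le hQ hQP ⟨hx0, hx1.le⟩)
    (summable_mkzWeight hQ hQP hx0 hx1).hasSum
    ((hasSum_one_sub_mul_geometric hx0 hx1).mul_left (mkzBound P Q n))

lemma abs_mkz_le (hQ : 0 ≤ Q) (hQP : Q < P) {g : ℝ → ℝ} {M : ℝ}
    (hg : ∀ s ∈ Set.Icc (0 : ℝ) 1, |g s| ≤ M) (hx : x ∈ Set.Icc (0 : ℝ) 1) :
    |mkz P Q n g x| ≤ M * max (mkzBound P Q n) 1 := by
  have hM : 0 ≤ M := (abs_nonneg _).trans (hg 0 ⟨le_rfl, zero_le_one⟩)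
  rcases eq_or_lt_of_le hx.2 with rfl | hx1
  · rw [mkz_one_s12]
    exact (hg 1 hx).trans (le_mul_of_one_le_right hM (le_max_right _ _))
  · rw [mkz_of_ne_one hx1.ne]
    calc |∑' k, mkzWeight P Q n x k * g (mkzNode P Q n k)|
        ≤ (∑' k, mkzWeight P Q n x k) * M :=
          abs_tsum_mul_le (mkzWeight_nonneg hQ hQP hx) (summable_mkzWeight hQ hQP hx.1 hx1)
            fun k => hg _ (mkzNode_mem_Icc hQ hQP n k)
      _ ≤ M * max (mkzBound P Q n) 1 := by
          rw [mul_comm]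
          gcongr
          exact (tsum_mkzWeight_le hQ hQP hx.1 hx1).trans (le_max_left _ _)

lemma abs_mkz_sub_le (hQ : 0 ≤ Q) (hQP : Q < P) {f : ℝ → ℝ} {M ε B : ℝ}
    (hM : ∀ s ∈ Set.Icc (0 : ℝ) 1, |f s| ≤ M)
    (hfB : ∀ s ∈ Set.Icc (0 : ℝ) 1, ∀ t ∈ Set.Icc (0 : ℝ) 1, |f s - f t| ≤ ε + B * (s - t) ^ 2)
    (hε : 0 ≤ ε) (hB : 0 ≤ B) (hx : x ∈ Set.Icc (0 : ℝ) 1) :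
    |mkz P Q n f x - f x|
      ≤ ε + (ε + M + B) * |mkz P Q n (fun t => t ^ 0) x - x ^ 0|
        + 2 * B * |mkz P Q n (fun t => t ^ 1) x - x ^ 1|
        + B * |mkz P Q n (fun t => t ^ 2) x - x ^ 2| := by
  rcases eq_or_lt_of_le hx.2 with rfl | hx1
  · simp only [mkz_one_s12, sub_self, abs_zero, mul_zero, add_zero]
    exact hε
  · simp only [mkz_of_ne_one hx1.ne, pow_zero, pow_one, mul_one]
    exact abs_tsum_mul_sub_le (mkzWeight_nonneg hQ hQP hx) (summable_mkzWeight hQ hQP hx.1 hx1)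
      (mkzNode_mem_Icc hQ hQP n) hM hx (fun s hs => hfB s hs x hx) hε hB

lemma supNorm_mkz_sub_le (hQ : 0 ≤ Q) (hQP : Q < P) {f : ℝ → ℝ} {M ε B : ℝ}
    (hM : ∀ s ∈ Set.Icc (0 : ℝ) 1, |f s| ≤ M)
    (hfB : ∀ s ∈ Set.Icc (0 : ℝ) 1, ∀ t ∈ Set.Icc (0 : ℝ) 1, |f s - f t| ≤ ε + B * (s - t) ^ 2)
    (hε : 0 ≤ ε) (hB : 0 ≤ B) :
    supNorm (fun x => mkz P Q n f x - f x)
      ≤ ε + (ε + M + 2 * B) *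
        ∑ i ∈ Finset.range 3, supNorm (fun x => mkz P Q n (fun t => t ^ i) x - x ^ i) := by
  have hM0 : 0 ≤ M := (abs_nonneg _).trans (hM 0 ⟨le_rfl, zero_le_one⟩)
  have htest : ∀ i : ℕ, ∀ x ∈ Set.Icc (0 : ℝ) 1, |mkz P Q n (fun t => t ^ i) x - x ^ i|
      ≤ supNorm (fun x => mkz P Q n (fun t => t ^ i) x - x ^ i) := by
    have hpow : ∀ i : ℕ, ∀ s ∈ Set.Icc (0 : ℝ) 1, |s ^ i| ≤ 1 := fun i s hs => by
      rw [abs_of_nonneg (pow_nonneg hs.1 i)]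
      exact pow_le_one₀ hs.1 hs.2
    exact fun i x hx => abs_le_supNorm (fun y hy =>
      (abs_sub _ _).trans (add_le_add (abs_mkz_le hQ hQP (hpow i) hy) (hpow i y hy))) hx
  refine supNorm_le fun x hx => (abs_mkz_sub_le hQ hQP hM hfB hε hB hx).trans ?_
  have hcoeff : ∀ {c : ℝ}, c ≤ ε + M + 2 * B → ∀ i : ℕ,
      c * |mkz P Q n (fun t => t ^ i) x - x ^ i|
        ≤ (ε + M + 2 * B) * supNorm (fun x => mkz P Q n (fun t => t ^ i) x - x ^ i) :=
    fun hc i => mul_le_mul hc (htest i x hx) (abs_nonneg _) (by positivity)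
  simp only [Finset.sum_range_succ, Finset.sum_range_zero, zero_add, mul_add]
  linarith [hcoeff (c := ε + M + B) (by linarith) 0, hcoeff (c := 2 * B) (by linarith) 1,
    hcoeff (c := B) (by linarith) 2]

end MKZ

theorem mkz_statistical_korovkin_general (p q : ℕ → ℝ)
    (h : ∀ n, 0 < q n ∧ q n < p n ∧ p n ≤ 1)
    (htest : ∀ i : ℕ, i ≤ 2 →
      StatLim (fun n => supNorm (fun x => mkz (p n) (q n) n (fun t => t ^ i) x - x ^ i)) 0)
    (f : ℝ → ℝ) (hf : ContinuousOn f (Set.Icc 0 1)) :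
    StatLim (fun n => supNorm (fun x => mkz (p n) (q n) n f x - f x)) 0 := by
  obtain ⟨M, hM⟩ : ∃ M, ∀ t ∈ Set.Icc (0 : ℝ) 1, |f t| ≤ M := by
    simpa only [Real.norm_eq_abs] using isCompact_Icc.exists_bound_of_continuousOn hf
  refine statLim_zero_of_abs_le_add_mul_sum (s := Finset.range 3)
    (v := fun i n => supNorm (fun x => mkz (p n) (q n) n (fun t => t ^ i) x - x ^ i))
    (fun i hi => htest i (Nat.lt_succ_iff.mp (Finset.mem_range.mp hi))) fun ε hε => ?_
  obtain ⟨B, hB, hfB⟩ := isCompact_Icc.exists_abs_sub_le_add_mul_sq hf hε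
  refine ⟨ε + M + 2 * B, fun n => ?_⟩
  obtain ⟨hq, hqp, -⟩ := h n
  simpa only [abs_of_nonneg (supNorm_nonneg _)] using
    supNorm_mkz_sub_le hq.le hqp hM hfB hε.le hB

theorem mkz_statistical_korovkin (p q : ℕ → ℝ)
    (h : ∀ n, 0 < q n ∧ q n < p n ∧ p n ≤ 1)
    (hp : Filter.Tendsto p Filter.atTop (nhds 1))
    (hq : Filter.Tendsto q Filter.atTop (nhds 1))
    (htest : ∀ i : ℕ, i ≤ 2 →
      StatLim (fun n => supNorm (fun x => mkz (p n) (q n) n (fun t => t ^ i) x - x ^ i)) 0)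
    (f : ℝ → ℝ) (hf : ContinuousOn f (Set.Icc 0 1)) :
    StatLim (fun n => supNorm (fun x => mkz (p n) (q n) n f x - f x)) 0 :=
  mkz_statistical_korovkin_general p q h htest f hf
end
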